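/- arXiv:2006.08734 — 2 statements merged into one kernel-verified Lean document; each statement's English description precedes it below -/
import Mathlib

section
/- In any loop Q, the identities x(x·yz) = (x·xy)z and y(x·xz) = (y·xx)z (for all x,y,z) are equivalent. -/
/-- A loop: binary operation with two-sided identity and unique divisions. -/
class Loop (Q : Type*) extends Mul Q, One Q where
  ld : Q → Q → Q   -- left division: `ld x y = x \ y`
  rd : Q → Q → Q   -- right division: `rd x y = x / y`
  one_mul : ∀ x : Q, 1 * x = x
  mul_one : ∀ x : Q, x * 1 = x
  mul_ld : ∀ x y : Q, x * ld x y = y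
  ld_mul : ∀ x y : Q, ld x (x * y) = y
  rd_mul : ∀ x y : Q, rd x y * y = x
  mul_rd : ∀ x y : Q, rd (x * y) y = x

namespace Loop
variable {Q : Type*} [Loop Q]
/-- left inverse `x^λ = 1 / x` -/
def linv (x : Q) : Q := rd 1 x
/-- right inverse `x^ρ = x \ 1` -/
def rinv (x : Q) : Q := ld x 1
/-- left nucleus -/
def Nl (Q : Type*) [Loop Q] : Set Q := {a | ∀ x y : Q, a * (x * y) = (a * x) * y}
/-- middle nucleus -/
def Nm (Q : Type*) [Loop Q] : Set Q := {a | ∀ x y : Q, x * (a * y) = (x * a) * y}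
/-- right nucleus -/
def Nr (Q : Type*) [Loop Q] : Set Q := {a | ∀ x y : Q, (x * y) * a = x * (y * a)}
/-- the nucleus -/
def N (Q : Type*) [Loop Q] : Set Q := Nl Q ∩ Nm Q ∩ Nr Q
/-- `S` is a subloop -/
def IsSubloop (S : Set Q) : Prop :=
  (1 : Q) ∈ S ∧ ∀ a ∈ S, ∀ b ∈ S, a * b ∈ S ∧ ld a b ∈ S ∧ rd a b ∈ S
/-- normality of a subloop via the standard equational characterization -/
def IsNormal (S : Set Q) : Prop :=
  IsSubloop S ∧ ∀ x y : Q,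
    (x * ·) '' S = (· * x) '' S ∧
    (· * y) '' ((x * ·) '' S) = (x * ·) '' ((· * y) '' S) ∧
    (x * ·) '' ((y * ·) '' S) = ((x * y) * ·) '' S
end Loop

/-!
Putting `y = 1` in either identity gives left alternativity `x(xz) = (xx)z`; given it, the first
identity says that every square lies in the left nucleus, the second that every square lies in the
middle nucleus. In either case the inverse of each left translation `L_x` is again a left
translation (`L_{c x}` resp. `L_{x c}`, where `c` inverts `x²`). In a loop with this property the
left and the middle nucleus coincide: for `a` in one of them, a composite such as `L_u L_a` has a
left translation as inverse, so it is itself a left translation `L_w`, and `w = ua` by evaluating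
at `1`.
-/

namespace Loop

def HasLeftTranslationInverses (Q : Type*) [Loop Q] : Prop :=
  ∀ x : Q, ∃ x' : Q, ∀ z, x' * (x * z) = z

def IsLeftAlternative (Q : Type*) [Loop Q] : Prop :=
  ∀ x z : Q, x * (x * z) = (x * x) * z

variable {Q : Type*} [Loop Q]

theorem mul_left_cancel {x u v : Q} (h : x * u = x * v) : u = v := by
  simpa only [ld_mul] using congrArg (ld x) h

theorem mul_right_cancel {x u v : Q} (h : u * x = v * x) : u = v := by
  simpa only [mul_rd] using congrArg (rd · x) h

theorem mul_mul_eq_self_comm {x y : Q} (h : ∀ z, x * (y * z) = z) (z : Q) :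
    y * (x * z) = z :=
  mul_left_cancel (x := x) (h (x * z))

section LeftNucleus

variable {a : Q} (ha : a ∈ Nl Q)
include ha

theorem mul_rinv_mul_of_mem_Nl (z : Q) : a * (rinv a * z) = z := by
  rw [ha, rinv, mul_ld, one_mul]

theorem rinv_mul_mul_of_mem_Nl (z : Q) : rinv a * (a * z) = z :=
  mul_mul_eq_self_comm (mul_rinv_mul_of_mem_Nl ha) z

theorem rinv_mem_Nl : rinv a ∈ Nl Q := fun u z =>
  mul_left_cancel (x := a) <| by
    rw [mul_rinv_mul_of_mem_Nl ha, ha, mul_rinv_mul_of_mem_Nl ha]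

end LeftNucleus

section MiddleNucleus

variable {a : Q} (ha : a ∈ Nm Q)
include ha

theorem linv_mul_mul_of_mem_Nm (z : Q) : linv a * (a * z) = z := by
  rw [ha, linv, rd_mul, one_mul]

theorem mul_linv_mul_of_mem_Nm (z : Q) : a * (linv a * z) = z :=
  mul_mul_eq_self_comm (linv_mul_mul_of_mem_Nm ha) z

theorem linv_mem_Nm : linv a ∈ Nm Q := by
  have mul_linv : a * linv a = 1 := by simpa only [mul_one] using mul_linv_mul_of_mem_Nm ha 1
  have mul_linv_mul (u : Q) : u * linv a * a = u := by
    refine mul_right_cancel (x := linv a) ?_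
    rw [← ha, mul_linv, mul_one]
  intro u z
  conv_rhs => rw [← mul_linv_mul_of_mem_Nm ha z, ha, mul_linv_mul]

end MiddleNucleus

section LeftTranslationInverses

variable (hQ : HasLeftTranslationInverses Q)
include hQ

theorem apply_eq_apply_one_mul_of_mul_apply_eq {f : Q → Q} {v : Q} (hf : ∀ z, v * f z = z)
    (z : Q) : f z = f 1 * z := by
  obtain ⟨v', hv'⟩ := hQ v
  have hf' (w : Q) : f w = v' * w := by rw [← hv' (f w), hf]
  rw [hf', hf', mul_one]

theorem Nl_subset_Nm : Nl Q ⊆ Nm Q := by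
  intro a ha u z
  obtain ⟨u', hu'⟩ := hQ u
  have h := apply_eq_apply_one_mul_of_mul_apply_eq hQ (f := fun z => u * (a * z))
    (v := rinv a * u') fun z => by rw [← rinv_mem_Nl ha, hu', rinv_mul_mul_of_mem_Nl ha]
  simpa only [mul_one] using h z

theorem Nm_subset_Nl : Nm Q ⊆ Nl Q := by
  intro a ha y z
  obtain ⟨y', hy'⟩ := hQ y
  have h := apply_eq_apply_one_mul_of_mul_apply_eq hQ (f := fun z => a * (y * z))
    (v := y' * linv a) fun z => by rw [← linv_mem_Nm ha, linv_mul_mul_of_mem_Nm ha, hy']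
  simpa only [mul_one] using h z

end LeftTranslationInverses

section LeftAlternative

variable (hlalt : IsLeftAlternative Q)
include hlalt

theorem hasLeftTranslationInverses_of_sq_mem_Nl (hsq : ∀ x : Q, x * x ∈ Nl Q) :
    HasLeftTranslationInverses Q := fun x =>
  ⟨rinv (x * x) * x, fun z => by
    rw [← rinv_mem_Nl (hsq x), hlalt, rinv_mul_mul_of_mem_Nl (hsq x)]⟩

theorem hasLeftTranslationInverses_of_sq_mem_Nm (hsq : ∀ x : Q, x * x ∈ Nm Q) :
    HasLeftTranslationInverses Q := fun x =>
  ⟨x * linv (x * x), mul_mul_eq_self_comm fun z => by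
    rw [← linv_mem_Nm (hsq x), hlalt, mul_linv_mul_of_mem_Nm (hsq x)]⟩

end LeftAlternative

theorem forall_mul_mul_mul_iff_sq_mem_Nl :
    (∀ x y z : Q, x * (x * (y * z)) = (x * (x * y)) * z) ↔
      IsLeftAlternative Q ∧ ∀ x : Q, x * x ∈ Nl Q := by
  constructor
  · intro h
    have hlalt : IsLeftAlternative Q := fun x z => by
      simpa only [one_mul, mul_one] using h x 1 z
    exact ⟨hlalt, fun x y z => by rw [← hlalt, ← hlalt, h]⟩
  · rintro ⟨hlalt, hsq⟩ x y z
    rw [hlalt, hlalt, hsq]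

theorem forall_mul_mul_mul_iff_sq_mem_Nm :
    (∀ x y z : Q, y * (x * (x * z)) = (y * (x * x)) * z) ↔
      IsLeftAlternative Q ∧ ∀ x : Q, x * x ∈ Nm Q := by
  constructor
  · intro h
    have hlalt : IsLeftAlternative Q := fun x z => by
      simpa only [one_mul] using h x 1 z
    exact ⟨hlalt, fun x y z => by rw [← hlalt, h]⟩
  · rintro ⟨hlalt, hsq⟩ x y z
    rw [hlalt, hsq]

end Loop

open Loop in
theorem stmt4 {Q : Type*} [Loop Q] :
    (∀ x y z : Q, x * (x * (y * z)) = (x * (x * y)) * z) ↔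
      (∀ x y z : Q, y * (x * (x * z)) = (y * (x * x)) * z) := by
  rw [forall_mul_mul_mul_iff_sq_mem_Nl, forall_mul_mul_mul_iff_sq_mem_Nm]
  constructor
  · rintro ⟨hlalt, hsq⟩
    exact ⟨hlalt, fun x =>
      Nl_subset_Nm (hasLeftTranslationInverses_of_sq_mem_Nl hlalt hsq) (hsq x)⟩
  · rintro ⟨hlalt, hsq⟩
    exact ⟨hlalt, fun x =>
      Nm_subset_Nl (hasLeftTranslationInverses_of_sq_mem_Nm hlalt hsq) (hsq x)⟩
end

section
/- A loop Q is a C loop if and only if Q is an inverse property loop in which every square belongs to the nucleus. -/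
/-!
Specialising the C laws at `y = 1` gives the alternative laws `x(xy) = x²y` and `(yx)x = yx²`;
with these, the C laws say precisely that `x²` lies in the left and the right nucleus, and
specialising them at `y = x^λ` (resp. `x^ρ`) gives the inverse properties after cancelling.
In an IP loop inversion is an anti-automorphism, which makes every right nuclear element
middle nuclear. Conversely, in an IP loop with `x²` middle nuclear the alternative laws follow
from `x = x^λ · x² = x² · x^λ`, and the C laws then reduce to `x²` being left and right nuclear.
-/

namespace Loop

variable {Q : Type*} [Loop Q]

def LeftCLaw (Q : Type*) [Loop Q] : Prop := ∀ x y z : Q, x * (x * (y * z)) = (x * (x * y)) * z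

def RightCLaw (Q : Type*) [Loop Q] : Prop := ∀ x y z : Q, ((z * y) * x) * x = z * ((y * x) * x)

def LeftInverseProperty (Q : Type*) [Loop Q] : Prop := ∀ x y : Q, linv x * (x * y) = y

def RightInverseProperty (Q : Type*) [Loop Q] : Prop := ∀ x y : Q, (y * x) * rinv x = y

def InverseProperty (Q : Type*) [Loop Q] : Prop :=
  LeftInverseProperty Q ∧ RightInverseProperty Q

theorem mul_left_cancel_s7 {a b c : Q} (h : a * b = a * c) : b = c := by
  rw [← ld_mul a b, h, ld_mul]

theorem mul_right_cancel_s7 {a b c : Q} (h : b * a = c * a) : b = c := by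
  rw [← mul_rd b a, h, mul_rd]

theorem linv_mul_cancel (x : Q) : linv x * x = 1 := rd_mul 1 x

theorem mul_rinv_cancel (x : Q) : x * rinv x = 1 := mul_ld x 1

namespace LeftCLaw

variable (h : LeftCLaw Q)
include h

theorem leftInverseProperty : LeftInverseProperty Q := fun x y =>
  mul_left_cancel_s7 (by simpa only [linv_mul_cancel, Loop.mul_one] using h (linv x) x y)

theorem mul_mul_self_left (x y : Q) : x * (x * y) = (x * x) * y := by
  simpa only [Loop.one_mul, Loop.mul_one] using h x 1 y

theorem mul_self_mem_Nl (x : Q) : x * x ∈ Nl Q := fun y z => by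
  rw [← h.mul_mul_self_left, h, h.mul_mul_self_left]

end LeftCLaw

namespace RightCLaw

variable (h : RightCLaw Q)
include h

theorem rightInverseProperty : RightInverseProperty Q := fun x y =>
  mul_right_cancel_s7 (by simpa only [mul_rinv_cancel, Loop.one_mul] using h (rinv x) x y)

theorem mul_mul_self_right (x y : Q) : (y * x) * x = y * (x * x) := by
  simpa only [Loop.one_mul, Loop.mul_one] using h x 1 y

theorem mul_self_mem_Nr (x : Q) : x * x ∈ Nr Q := fun y z => by
  rw [← h.mul_mul_self_right, h, h.mul_mul_self_right]

end RightCLaw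

namespace InverseProperty

variable (h : InverseProperty Q)
include h

theorem linv_eq_rinv (x : Q) : linv x = rinv x := by
  simpa only [mul_rinv_cancel, Loop.mul_one] using h.1 x (rinv x)

theorem mul_linv_cancel_right (x y : Q) : (y * x) * linv x = y := by
  rw [h.linv_eq_rinv]; exact h.2 x y

theorem mul_linv_cancel (x : Q) : x * linv x = 1 := by
  simpa only [Loop.one_mul] using h.mul_linv_cancel_right x 1

theorem linv_linv (x : Q) : linv (linv x) = x := by
  simpa only [h.mul_linv_cancel, Loop.one_mul, ← h.linv_eq_rinv] using h.2 (linv x) x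

theorem mul_linv_cancel_left (x y : Q) : x * (linv x * y) = y := by
  simpa only [h.linv_linv] using h.1 (linv x) y

theorem linv_mul_cancel_right (x y : Q) : (y * linv x) * x = y := by
  simpa only [h.linv_linv] using h.mul_linv_cancel_right (linv x) y

theorem linv_mul_rev (x y : Q) : linv (x * y) = linv y * linv x := by
  have hx : linv (x * y) * x = linv y := by
    simpa only [h.mul_linv_cancel_right] using h.1 (x * y) (linv y)
  rw [← hx, h.mul_linv_cancel_right]

theorem mem_Nm_of_mem_Nr {a : Q} (ha : a ∈ Nr Q) : a ∈ Nm Q := fun u v => by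
  have hua : u * a = (u * (a * v)) * linv v :=
    calc u * a = ((u * (a * v)) * linv (a * v)) * a := by rw [h.mul_linv_cancel_right]
      _ = ((u * (a * v)) * (linv v * linv a)) * a := by rw [h.linv_mul_rev]
      _ = (u * (a * v)) * ((linv v * linv a) * a) := ha _ _
      _ = (u * (a * v)) * linv v := by rw [h.linv_mul_cancel_right]
  rw [hua, h.linv_mul_cancel_right]

theorem mul_mul_self_left {x : Q} (hx : x * x ∈ Nm Q) (y : Q) :
    x * (x * y) = (x * x) * y :=
  calc x * (x * y) = x * ((linv x * (x * x)) * y) := by rw [h.1]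
    _ = x * (linv x * ((x * x) * y)) := by rw [hx]
    _ = (x * x) * y := h.mul_linv_cancel_left x _

theorem mul_mul_self_right {x : Q} (hx : x * x ∈ Nm Q) (y : Q) :
    (y * x) * x = y * (x * x) :=
  calc (y * x) * x = (y * ((x * x) * linv x)) * x := by rw [h.mul_linv_cancel_right]
    _ = ((y * (x * x)) * linv x) * x := by rw [hx]
    _ = y * (x * x) := h.linv_mul_cancel_right x _

theorem leftCLaw (hsq : ∀ x : Q, x * x ∈ N Q) : LeftCLaw Q := fun x y z => by
  rw [h.mul_mul_self_left (hsq x).1.2, (hsq x).1.1, h.mul_mul_self_left (hsq x).1.2]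

theorem rightCLaw (hsq : ∀ x : Q, x * x ∈ N Q) : RightCLaw Q := fun x y z => by
  rw [h.mul_mul_self_right (hsq x).1.2, (hsq x).2, h.mul_mul_self_right (hsq x).1.2]

end InverseProperty

end Loop

open Loop in
theorem stmt7 {Q : Type*} [Loop Q] :
    ((∀ x y z : Q, x * (x * (y * z)) = (x * (x * y)) * z) ∧
     (∀ x y z : Q, ((z * y) * x) * x = z * ((y * x) * x))) ↔
      ((∀ x y : Q, linv x * (x * y) = y) ∧ (∀ x y : Q, (y * x) * rinv x = y) ∧
        ∀ x : Q, x * x ∈ N Q) := by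
  constructor
  · rintro ⟨hLC : LeftCLaw Q, hRC : RightCLaw Q⟩
    have hIP : InverseProperty Q := ⟨hLC.leftInverseProperty, hRC.rightInverseProperty⟩
    have hNr (x : Q) : x * x ∈ Nr Q := hRC.mul_self_mem_Nr x
    exact ⟨hIP.1, hIP.2, fun x => ⟨⟨hLC.mul_self_mem_Nl x, hIP.mem_Nm_of_mem_Nr (hNr x)⟩, hNr x⟩⟩
  · rintro ⟨hL, hR, hsq⟩
    have hIP : InverseProperty Q := ⟨hL, hR⟩
    exact ⟨hIP.leftCLaw hsq, hIP.rightCLaw hsq⟩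
end
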